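/- The polarization P_H reduces the modulus of continuity: for every measurable f : ℝⁿ → ℝ and every d > 0, ω_d(P_H f) ≤ ω_d(f), where ω_d(f) = esssup over ‖x−y‖ ≤ d of |f(x) − f(y)|. -/
import Mathlib


open MeasureTheory Set RealInnerProductSpace

/-- The reflection of `x` in the hyperplane `u^⊥`. -/
noncomputable def reflH {n : ℕ} (u x : EuclideanSpace ℝ (Fin n)) :
    EuclideanSpace ℝ (Fin n) :=
  x - (2 * ⟪x, u⟫) • u

/-- The polarization of `f` with respect to the oriented hyperplane `u^⊥`. -/
noncomputable def polarization {n : ℕ} (u : EuclideanSpace ℝ (Fin n))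
    (f : EuclideanSpace ℝ (Fin n) → ℝ) (x : EuclideanSpace ℝ (Fin n)) : ℝ :=
  if 0 ≤ ⟪x, u⟫ then max (f x) (f (reflH u x)) else min (f x) (f (reflH u x))

/-- The modulus of continuity `ω_d(f) = esssup_{‖x-y‖ ≤ d} |f(x) - f(y)|`,
computed in `ℝ≥0∞` as the essential supremum with respect to the product
Lebesgue measure restricted to `{(x,y) : ‖x-y‖ ≤ d}`. -/
noncomputable def modCont {n : ℕ} (f : EuclideanSpace ℝ (Fin n) → ℝ) (d : ℝ) :
    ENNReal :=
  essSup (fun q : EuclideanSpace ℝ (Fin n) × EuclideanSpace ℝ (Fin n) =>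
      ENNReal.ofReal |f q.1 - f q.2|)
    (volume.restrict {q : EuclideanSpace ℝ (Fin n) × EuclideanSpace ℝ (Fin n) |
      ‖q.1 - q.2‖ ≤ d})

variable {n : ℕ}

variable {n : ℕ}

lemma reflH_invol (u : EuclideanSpace ℝ (Fin n)) (hu : ‖u‖ = 1) (x) :
    reflH u (reflH u x) = x := by
  have h : ⟪u, u⟫ = (1:ℝ) := by rw [real_inner_self_eq_norm_sq, hu]; norm_num
  simp only [reflH, inner_sub_left, real_inner_smul_left, h]
  module

lemma reflH_sub (u x y : EuclideanSpace ℝ (Fin n)) :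
    reflH u x - reflH u y = reflH u (x - y) := by
  simp [reflH, inner_sub_left]
  module

lemma norm_sub_reflH_sq (u : EuclideanSpace ℝ (Fin n)) (hu : ‖u‖ = 1) (x y) :
    ‖x - reflH u y‖ ^ 2 = ‖x - y‖ ^ 2 + 4 * ⟪x, u⟫ * ⟪y, u⟫ := by
  have h : x - reflH u y = (x - y) + (2 * ⟪y, u⟫) • u := by
    simp only [reflH]; abel
  rw [h, norm_add_sq_real, real_inner_smul_right, inner_sub_left, norm_smul, hu, mul_one,
    Real.norm_eq_abs, sq_abs]
  ring

lemma norm_reflH (u : EuclideanSpace ℝ (Fin n)) (hu : ‖u‖ = 1) (z) :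
    ‖reflH u z‖ = ‖z‖ := by
  have h : ‖(0:EuclideanSpace ℝ (Fin n)) - reflH u z‖ ^ 2 = ‖(0:EuclideanSpace ℝ (Fin n)) - z‖ ^ 2 + 4 * ⟪(0:EuclideanSpace ℝ (Fin n)), u⟫ * ⟪z, u⟫ :=
    norm_sub_reflH_sq u hu 0 z
  simp at h
  nlinarith [norm_nonneg (reflH u z), norm_nonneg z]

/-- `reflH u` as a linear map. -/
noncomputable def reflL (u : EuclideanSpace ℝ (Fin n)) :
    EuclideanSpace ℝ (Fin n) →ₗ[ℝ] EuclideanSpace ℝ (Fin n) where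
  toFun := reflH u
  map_add' x y := by
    simp only [reflH, inner_add_left]
    module
  map_smul' c x := by
    simp only [reflH, real_inner_smul_left, RingHom.id_apply]
    module

/-- `reflH u` as a linear isometry equivalence. -/
noncomputable def reflLI (u : EuclideanSpace ℝ (Fin n)) (hu : ‖u‖ = 1) :
    EuclideanSpace ℝ (Fin n) ≃ₗᵢ[ℝ] EuclideanSpace ℝ (Fin n) :=
  { LinearEquiv.ofInvolutive (reflL u) (fun x => reflH_invol u hu x) with
    norm_map' := fun x => norm_reflH u hu x }

lemma reflH_measurePreserving (u : EuclideanSpace ℝ (Fin n)) (hu : ‖u‖ = 1) :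
    MeasurePreserving (fun x : EuclideanSpace ℝ (Fin n) => reflH u x) volume volume :=
  (reflLI u hu).measurePreserving

lemma four_max_max (a b c e : ℝ) :
    |max a b - min c e| ≤ max (max |a - c| |a - e|) (max |b - c| |b - e|) := by
  rcases max_cases a b with ⟨h1, _⟩ | ⟨h1, _⟩ <;> rcases min_cases c e with ⟨h2, _⟩ | ⟨h2, _⟩ <;>
    rw [h1, h2]
  · exact le_max_of_le_left (le_max_left _ _)
  · exact le_max_of_le_left (le_max_right _ _)
  · exact le_max_of_le_right (le_max_left _ _)
  · exact le_max_of_le_right (le_max_right _ _)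

lemma four_min_max (a b c e : ℝ) :
    |min a b - max c e| ≤ max (max |a - c| |a - e|) (max |b - c| |b - e|) := by
  rcases min_cases a b with ⟨h1, _⟩ | ⟨h1, _⟩ <;> rcases max_cases c e with ⟨h2, _⟩ | ⟨h2, _⟩ <;>
    rw [h1, h2]
  · exact le_max_of_le_left (le_max_left _ _)
  · exact le_max_of_le_left (le_max_right _ _)
  · exact le_max_of_le_right (le_max_left _ _)
  · exact le_max_of_le_right (le_max_right _ _)

lemma ofReal_le_of_le_max {p r s : ℝ} {M : ENNReal} (h : p ≤ max r s)
    (hr : ENNReal.ofReal r ≤ M) (hs : ENNReal.ofReal s ≤ M) : ENNReal.ofReal p ≤ M := by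
  rcases le_total r s with h' | h'
  · exact le_trans (ENNReal.ofReal_le_ofReal (h.trans_eq (max_eq_right h'))) hs
  · exact le_trans (ENNReal.ofReal_le_ofReal (h.trans_eq (max_eq_left h'))) hr

lemma ofReal_le_of_le_max4 {p r s t w : ℝ} {M : ENNReal}
    (h : p ≤ max (max r s) (max t w))
    (hr : ENNReal.ofReal r ≤ M) (hs : ENNReal.ofReal s ≤ M)
    (ht : ENNReal.ofReal t ≤ M) (hw : ENNReal.ofReal w ≤ M) : ENNReal.ofReal p ≤ M := by
  rcases le_total (max r s) (max t w) with h' | h'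
  · exact ofReal_le_of_le_max (h.trans_eq (max_eq_right h')) ht hw
  · exact ofReal_le_of_le_max (h.trans_eq (max_eq_left h')) hr hs

lemma norm_cross_le (u : EuclideanSpace ℝ (Fin n)) (hu : ‖u‖ = 1) {x y : EuclideanSpace ℝ (Fin n)}
    (hprod : ⟪x, u⟫ * ⟪y, u⟫ ≤ 0) : ‖x - reflH u y‖ ≤ ‖x - y‖ := by
  have h := norm_sub_reflH_sq u hu x y
  nlinarith [norm_nonneg (x - reflH u y), norm_nonneg (x - y)]

lemma pointwise_bound (u : EuclideanSpace ℝ (Fin n)) (hu : ‖u‖ = 1)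
    (f : EuclideanSpace ℝ (Fin n) → ℝ) (M : ENNReal) (d : ℝ)
    (x y : EuclideanSpace ℝ (Fin n)) (hxy : ‖x - y‖ ≤ d)
    (h00 : ‖x - y‖ ≤ d → ENNReal.ofReal |f x - f y| ≤ M)
    (h11 : ‖reflH u x - reflH u y‖ ≤ d → ENNReal.ofReal |f (reflH u x) - f (reflH u y)| ≤ M)
    (h10 : ‖reflH u x - y‖ ≤ d → ENNReal.ofReal |f (reflH u x) - f y| ≤ M)
    (h01 : ‖x - reflH u y‖ ≤ d → ENNReal.ofReal |f x - f (reflH u y)| ≤ M) :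
    ENNReal.ofReal |polarization u f x - polarization u f y| ≤ M := by
  have hsym : ‖reflH u x - reflH u y‖ = ‖x - y‖ := by
    rw [reflH_sub, norm_reflH u hu]
  have H00 := h00 hxy
  have H11 := h11 (hsym ▸ hxy)
  unfold polarization
  split_ifs with hx hy hy
  · exact ofReal_le_of_le_max (abs_max_sub_max_le_max _ _ _ _) H00 H11
  · -- x side nonneg, y side negative
    have hprod : ⟪x, u⟫ * ⟪y, u⟫ ≤ 0 :=
      mul_nonpos_of_nonneg_of_nonpos hx (le_of_lt (not_le.mp hy))
    have hc1 : ‖x - reflH u y‖ ≤ d := (norm_cross_le u hu hprod).trans hxy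
    have hc2 : ‖reflH u x - y‖ ≤ d := by
      have : ‖y - reflH u x‖ ≤ ‖y - x‖ :=
        norm_cross_le u hu (by nlinarith)
      rw [norm_sub_rev]
      exact this.trans ((norm_sub_rev y x).le.trans hxy)
    exact ofReal_le_of_le_max4 (four_max_max _ _ _ _) H00 (h01 hc1) (h10 hc2) H11
  · -- x side negative, y side nonneg
    have hprod : ⟪x, u⟫ * ⟪y, u⟫ ≤ 0 :=
      mul_nonpos_of_nonpos_of_nonneg (le_of_lt (not_le.mp hx)) hy
    have hc1 : ‖x - reflH u y‖ ≤ d := (norm_cross_le u hu hprod).trans hxy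
    have hc2 : ‖reflH u x - y‖ ≤ d := by
      have : ‖y - reflH u x‖ ≤ ‖y - x‖ :=
        norm_cross_le u hu (by nlinarith)
      rw [norm_sub_rev]
      exact this.trans ((norm_sub_rev y x).le.trans hxy)
    exact ofReal_le_of_le_max4 (four_min_max _ _ _ _) H00 (h01 hc1) (h10 hc2) H11
  · exact ofReal_le_of_le_max (abs_min_sub_min_le_max _ _ _ _) H00 H11

theorem stmt_16 {n : ℕ} (u : EuclideanSpace ℝ (Fin n)) (hu : ‖u‖ = 1)
    (f : EuclideanSpace ℝ (Fin n) → ℝ) (hf : Measurable f) (d : ℝ) (hd : 0 < d) :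
    modCont (polarization u f) d ≤ modCont f d := by
  classical
  set S : Set (EuclideanSpace ℝ (Fin n) × EuclideanSpace ℝ (Fin n)) :=
    {q : EuclideanSpace ℝ (Fin n) × EuclideanSpace ℝ (Fin n) | ‖q.1 - q.2‖ ≤ d} with hSdef
  have hS : MeasurableSet S := by
    have : IsClosed S := isClosed_le (by continuity) continuous_const
    exact this.measurableSet
  set M : ENNReal := modCont f d with hM
  set g : EuclideanSpace ℝ (Fin n) × EuclideanSpace ℝ (Fin n) → ENNReal :=
    fun q => ENNReal.ofReal |f q.1 - f q.2| with hg
  set N : Set (EuclideanSpace ℝ (Fin n) × EuclideanSpace ℝ (Fin n)) :=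
    {q | q ∈ S ∧ ¬ g q ≤ M} with hNdef
  have hN : volume N = 0 := by
    have h1 : ∀ᵐ q ∂(volume.restrict S), g q ≤ M := ENNReal.ae_le_essSup g
    rw [ae_restrict_iff' hS] at h1
    rw [ae_iff] at h1
    convert h1 using 2
    ext q
    simp [hNdef, Classical.not_imp]
  have hR := reflH_measurePreserving u hu
  have hT1 : MeasurePreserving
      (Prod.map (fun x => reflH u x) (id : EuclideanSpace ℝ (Fin n) → EuclideanSpace ℝ (Fin n)))
      volume volume := by
    have := hR.prod (MeasurePreserving.id (volume : Measure (EuclideanSpace ℝ (Fin n))))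
    rwa [← Measure.volume_eq_prod] at this
  have hT2 : MeasurePreserving
      (Prod.map (id : EuclideanSpace ℝ (Fin n) → EuclideanSpace ℝ (Fin n)) (fun x => reflH u x))
      volume volume := by
    have := (MeasurePreserving.id (volume : Measure (EuclideanSpace ℝ (Fin n)))).prod hR
    rwa [← Measure.volume_eq_prod] at this
  have hT3 : MeasurePreserving
      (Prod.map (fun x : EuclideanSpace ℝ (Fin n) => reflH u x) (fun x => reflH u x))
      volume volume := by
    have := hR.prod hR
    rwa [← Measure.volume_eq_prod] at this
  have hZ1 : volume (Prod.map (fun x => reflH u x)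
      (id : EuclideanSpace ℝ (Fin n) → EuclideanSpace ℝ (Fin n)) ⁻¹' N) = 0 :=
    hT1.quasiMeasurePreserving.preimage_null hN
  have hZ2 : volume (Prod.map (id : EuclideanSpace ℝ (Fin n) → EuclideanSpace ℝ (Fin n))
      (fun x => reflH u x) ⁻¹' N) = 0 :=
    hT2.quasiMeasurePreserving.preimage_null hN
  have hZ3 : volume (Prod.map (fun x : EuclideanSpace ℝ (Fin n) => reflH u x)
      (fun x => reflH u x) ⁻¹' N) = 0 :=
    hT3.quasiMeasurePreserving.preimage_null hN
  have hgoal : modCont (polarization u f) d =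
      essSup (fun q : EuclideanSpace ℝ (Fin n) × EuclideanSpace ℝ (Fin n) =>
        ENNReal.ofReal |polarization u f q.1 - polarization u f q.2|) (volume.restrict S) := rfl
  rw [hgoal]
  have hae : ∀ᵐ q ∂(volume.restrict S),
      q ∉ N ∧ q ∉ Prod.map (fun x => reflH u x)
        (id : EuclideanSpace ℝ (Fin n) → EuclideanSpace ℝ (Fin n)) ⁻¹' N ∧
      q ∉ Prod.map (id : EuclideanSpace ℝ (Fin n) → EuclideanSpace ℝ (Fin n))
        (fun x => reflH u x) ⁻¹' N ∧
      q ∉ Prod.map (fun x : EuclideanSpace ℝ (Fin n) => reflH u x) (fun x => reflH u x) ⁻¹' N := by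
    refine ae_restrict_of_ae ?_
    exact (measure_eq_zero_iff_ae_notMem.mp hN).and
      ((measure_eq_zero_iff_ae_notMem.mp hZ1).and
        ((measure_eq_zero_iff_ae_notMem.mp hZ2).and (measure_eq_zero_iff_ae_notMem.mp hZ3)))
  have hmem : ∀ᵐ q ∂(volume.restrict S), q ∈ S := ae_restrict_mem hS
  refine essSup_le_of_ae_le M ?_
  filter_upwards [hae, hmem] with q hq hqS
  obtain ⟨h0, h1, h2, h3⟩ := hq
  have hxy : ‖q.1 - q.2‖ ≤ d := hqS
  have e0 : ‖q.1 - q.2‖ ≤ d → ENNReal.ofReal |f q.1 - f q.2| ≤ M := by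
    intro hh; by_contra hcon; exact h0 ⟨hh, hcon⟩
  have e1 : ‖reflH u q.1 - q.2‖ ≤ d → ENNReal.ofReal |f (reflH u q.1) - f q.2| ≤ M := by
    intro hh; by_contra hcon; exact h1 ⟨hh, hcon⟩
  have e2 : ‖q.1 - reflH u q.2‖ ≤ d → ENNReal.ofReal |f q.1 - f (reflH u q.2)| ≤ M := by
    intro hh; by_contra hcon; exact h2 ⟨hh, hcon⟩
  have e3 : ‖reflH u q.1 - reflH u q.2‖ ≤ d →
      ENNReal.ofReal |f (reflH u q.1) - f (reflH u q.2)| ≤ M := by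
    intro hh; by_contra hcon; exact h3 ⟨hh, hcon⟩
  exact pointwise_bound u hu f M d q.1 q.2 hxy e0 e3 e1 e2
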